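/- With notation as in the Dieudonné-module setup over an algebraically closed field k of characteristic p > 0: let M be a W-submodule of N with F(M) ⊆ M, V(M) ⊆ M and (F,V)N ⊆ M ⊆ N such that both quotients M/(F,V)N and N/M are isomorphic to k = W/pW as W-modules. Then there exists a pair (x₁, x₂) ∈ k² \ {(0,0)}, unique up to multiplication by a common scalar in k^×, with M = (F,V)N + W·([x₁], 0, 0, [x₂], 0, 0). Moreover, for every (x₁, x₂) ∈ k² the W-submodule M_{(x₁,x₂)} := (F,V)N + W·([x₁], 0, 0, [x₂], 0, 0) is stable under F and V; and if x₁ ≠ 0 and x₂ ≠ 0, then F(M_{(x₁,x₂)}) + V(M_{(x₁,x₂)}) = (F,V)N. -/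

import Mathlib

/-!
Reducing the coordinates `0` and `3` modulo `p` identifies `N/(F,V)N` with `k²`. Since
`M/(F,V)N ≅ k` is a simple module, `M` covers `(F,V)N`; any `m ∈ M \ (F,V)N` then gives
`M = M_x` with `x` the residue of `m`, and `M_x` determines the line `k·x`, hence `x` up to `k^×`.
`F` and `V` map all of `N` into `(F,V)N`. Conversely `F(M_x) + V(M_x)` contains `(F,V)N`: the
coordinates `1` and `4`, which `V` and `F` reach from `(F,V)N` only modulo `p`, are reached as
`V` and `F` of multiples of `([x₁],0,0,[x₂],0,0)`, whose entries are units when `x₁, x₂ ≠ 0`.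
-/

noncomputable section

namespace Stmt8

variable (p : ℕ) [Fact p.Prime] (k : Type) [Field k] [CharP k p] [IsAlgClosed k]

/-- The Witt-vector Frobenius `σ`, a ring automorphism of `W = W(k)`. -/
def σ : WittVector p k ≃+* WittVector p k := WittVector.frobeniusEquiv p k

/-- The operator `F` on `N = D₁₂ ⊕ D₂₁ = W^6`. -/
def Fop (x : Fin 6 → WittVector p k) : Fin 6 → WittVector p k :=
  ![(p : WittVector p k) * σ p k (x 1), (p : WittVector p k) * σ p k (x 2), σ p k (x 0),
    (p : WittVector p k) * σ p k (x 5), σ p k (x 3), σ p k (x 4)]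

/-- The operator `V` on `N = D₁₂ ⊕ D₂₁ = W^6`. -/
def Vop (x : Fin 6 → WittVector p k) : Fin 6 → WittVector p k :=
  ![(p : WittVector p k) * (σ p k).symm (x 2), (σ p k).symm (x 0), (σ p k).symm (x 1),
    (p : WittVector p k) * (σ p k).symm (x 4), (p : WittVector p k) * (σ p k).symm (x 5),
    (σ p k).symm (x 3)]

/-- The `W`-submodule `(F,V)N = F(N) + V(N) = pW × W × W × pW × W × W` of `N = W^6`. -/
def FVN : Submodule (WittVector p k) (Fin 6 → WittVector p k) :=
  Submodule.comap (LinearMap.proj (R := WittVector p k) (φ := fun _ : Fin 6 => WittVector p k) 0)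
      (Ideal.span {(p : WittVector p k)}) ⊓
    Submodule.comap (LinearMap.proj (R := WittVector p k) (φ := fun _ : Fin 6 => WittVector p k) 3)
      (Ideal.span {(p : WittVector p k)})

/-- The vector `([x₁], 0, 0, [x₂], 0, 0) ∈ N`, where `[·]` is the Teichmüller lift. -/
def gen (x : k × k) : Fin 6 → WittVector p k :=
  ![WittVector.teichmuller p x.1, 0, 0, WittVector.teichmuller p x.2, 0, 0]

/-- The `W`-submodule `M_{(x₁,x₂)} = (F,V)N + W·([x₁],0,0,[x₂],0,0)` of `N`. -/
def Mmod (x : k × k) : Submodule (WittVector p k) (Fin 6 → WittVector p k) :=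
  FVN p k ⊔ Submodule.span (WittVector p k) {gen p k x}

end Stmt8

namespace Stmt8

open WittVector

theorem covBy_of_linearEquiv_quotient {R E : Type*} [CommRing R] [AddCommGroup E] [Module R E]
    {A B : Submodule R E} (hAB : A ≤ B) {I : Ideal R} (hI : I.IsMaximal)
    (e : (B ⧸ Submodule.comap B.subtype A) ≃ₗ[R] R ⧸ I) : A ⋖ B :=
  (covBy_iff_quot_is_simple hAB).2 (isSimpleModule_iff_quot_maximal.2 ⟨I, hI, ⟨e⟩⟩)

variable {p : ℕ} [Fact p.Prime] {k : Type} [Field k]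

def residue {R : Type*} [CommRing R] :
    (Fin 6 → WittVector p R) →ₛₗ[WittVector.constantCoeff (p := p) (R := R)] R × R where
  toFun y := (constantCoeff (y 0), constantCoeff (y 3))
  map_add' _ _ := Prod.ext (map_add _ _ _) (map_add _ _ _)
  map_smul' _ _ := Prod.ext (map_mul _ _ _) (map_mul _ _ _)

theorem residue_gen (x : k × k) : residue (gen p k x) = x := by
  simp [residue, gen]

theorem mem_FVN_iff {y : Fin 6 → WittVector p k} :
    y ∈ FVN p k ↔ y 0 ∈ Ideal.span {(p : WittVector p k)} ∧
      y 3 ∈ Ideal.span {(p : WittVector p k)} := by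
  simp [FVN]

variable [CharP k p] [IsAlgClosed k]

theorem isMaximal_span_p : (Ideal.span {(p : WittVector p k)}).IsMaximal :=
  PrincipalIdealRing.isMaximal_of_irreducible (WittVector.irreducible p)

theorem mem_FVN_iff_residue_eq_zero {y : Fin 6 → WittVector p k} :
    y ∈ FVN p k ↔ residue y = 0 := by
  simp [mem_FVN_iff, mem_span_p_iff_coeff_zero_eq_zero, residue, Prod.ext_iff]

theorem mem_Mmod_iff {x : k × k} {y : Fin 6 → WittVector p k} :
    y ∈ Mmod p k x ↔ ∃ c : k, residue y = c • x := by
  constructor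
  · intro hy
    obtain ⟨f, hf, g, hg, rfl⟩ := Submodule.mem_sup.1 hy
    obtain ⟨w, rfl⟩ := Submodule.mem_span_singleton.1 hg
    refine ⟨constantCoeff w, ?_⟩
    rw [map_add, mem_FVN_iff_residue_eq_zero.1 hf, map_smulₛₗ, residue_gen, zero_add]
  · rintro ⟨c, hc⟩
    have hgen : teichmuller p c • gen p k x ∈ Mmod p k x :=
      Submodule.mem_sup_right (Submodule.smul_mem _ _ (Submodule.mem_span_singleton_self _))
    have hrest : y - teichmuller p c • gen p k x ∈ Mmod p k x := by
      refine Submodule.mem_sup_left (mem_FVN_iff_residue_eq_zero.2 ?_)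
      simp [map_smulₛₗ, residue_gen, hc]
    simpa using add_mem hrest hgen

theorem Fop_mem_FVN (z : Fin 6 → WittVector p k) : Fop p k z ∈ FVN p k :=
  mem_FVN_iff.2 ⟨Ideal.mul_mem_right _ _ (Ideal.mem_span_singleton_self _),
    Ideal.mul_mem_right _ _ (Ideal.mem_span_singleton_self _)⟩

theorem Vop_mem_FVN (z : Fin 6 → WittVector p k) : Vop p k z ∈ FVN p k :=
  mem_FVN_iff.2 ⟨Ideal.mul_mem_right _ _ (Ideal.mem_span_singleton_self _),
    Ideal.mul_mem_right _ _ (Ideal.mem_span_singleton_self _)⟩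

theorem exists_eq_Mmod_of_covBy {M : Submodule (WittVector p k) (Fin 6 → WittVector p k)}
    (hM : FVN p k ⋖ M) : ∃ x ≠ 0, M = Mmod p k x := by
  obtain ⟨m, hmM, hm⟩ := SetLike.exists_of_lt hM.lt
  have hx : residue m ≠ 0 := mt mem_FVN_iff_residue_eq_zero.2 hm
  have hgen : gen p k (residue m) ∈ M := by
    have hdiff : m - gen p k (residue m) ∈ FVN p k :=
      mem_FVN_iff_residue_eq_zero.2 (by rw [map_sub, residue_gen, sub_self])
    simpa using M.sub_mem hmM (hM.le hdiff)
  have hle : Mmod p k (residue m) ≤ M :=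
    sup_le hM.le ((Submodule.span_singleton_le_iff_mem _ _).2 hgen)
  have hne : FVN p k ≠ Mmod p k (residue m) := fun h ↦ hx <| by
    have hgen' : gen p k (residue m) ∈ FVN p k :=
      h ▸ Submodule.mem_sup_right (Submodule.mem_span_singleton_self _)
    rwa [mem_FVN_iff_residue_eq_zero, residue_gen] at hgen'
  exact ⟨residue m, hx, ((hM.eq_or_eq le_sup_left hle).resolve_left hne.symm).symm⟩

theorem exists_unit_smul_of_Mmod_eq {x y : k × k} (hy : y ≠ 0)
    (h : Mmod p k x = Mmod p k y) : ∃ c : kˣ, y = (c : k) • x := by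
  have hgen : gen p k y ∈ Mmod p k x :=
    h ▸ Submodule.mem_sup_right (Submodule.mem_span_singleton_self _)
  obtain ⟨c, hc⟩ := mem_Mmod_iff.1 hgen
  rw [residue_gen] at hc
  have hc0 : c ≠ 0 := by
    rintro rfl
    exact hy (by rwa [zero_smul] at hc)
  exact ⟨Units.mk0 c hc0, hc⟩

theorem exists_Fop_add_Vop_eq {x : k × k} (hx1 : x.1 ≠ 0) (hx2 : x.2 ≠ 0)
    {y : Fin 6 → WittVector p k} (hy : y ∈ FVN p k) :
    ∃ a ∈ Mmod p k x, ∃ b ∈ Mmod p k x, y = Fop p k a + Vop p k b := by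
  obtain ⟨⟨u, hu⟩, ⟨v, hv⟩⟩ := (mem_FVN_iff.1 hy).imp Ideal.mem_span_singleton.1
    Ideal.mem_span_singleton.1
  obtain ⟨t₁, ht₁⟩ : IsUnit (teichmuller p x.1) :=
    isUnit_of_coeff_zero_ne_zero _ (by rwa [teichmuller_coeff_zero])
  obtain ⟨t₂, ht₂⟩ : IsUnit (teichmuller p x.2) :=
    isUnit_of_coeff_zero_ne_zero _ (by rwa [teichmuller_coeff_zero])
  set wa := (σ p k).symm (y 4) * ↑t₂⁻¹
  set wb := σ p k (y 1) * ↑t₁⁻¹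
  refine ⟨![wa * t₁, (σ p k).symm u, 0, wa * t₂, (σ p k).symm (y 5 - (σ p k).symm (wb * t₂)),
      (σ p k).symm v],
    mem_Mmod_iff.2 ⟨constantCoeff wa, ?_⟩,
    ![wb * t₁, σ p k (y 2 - σ p k (wa * t₁)), 0, wb * t₂, 0, 0],
    mem_Mmod_iff.2 ⟨constantCoeff wb, ?_⟩, ?_⟩
  · simp [residue, mul_coeff_zero, ht₁, ht₂, Prod.ext_iff]
  · simp [residue, mul_coeff_zero, ht₁, ht₂, Prod.ext_iff]
  · funext i
    fin_cases i <;> simp [Fop, Vop, wa, wb, hu, hv]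

theorem image_Fop_add_Vop_Mmod {x : k × k} (hx1 : x.1 ≠ 0) (hx2 : x.2 ≠ 0) :
    {y : Fin 6 → WittVector p k |
        ∃ a ∈ Mmod p k x, ∃ b ∈ Mmod p k x, y = Fop p k a + Vop p k b}
      = (FVN p k : Set (Fin 6 → WittVector p k)) := by
  refine Set.Subset.antisymm ?_ fun y hy ↦ exists_Fop_add_Vop_eq hx1 hx2 hy
  rintro _ ⟨a, -, b, -, rfl⟩
  exact add_mem (Fop_mem_FVN a) (Vop_mem_FVN b)

variable (p k) in
theorem stmt_8 (M : Submodule (WittVector p k) (Fin 6 → WittVector p k))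
    (hlow : FVN p k ≤ M)
    (hq1 : Nonempty ((↥M ⧸ (Submodule.comap M.subtype (FVN p k))) ≃ₗ[WittVector p k]
      (WittVector p k ⧸ (Ideal.span {(p : WittVector p k)}
        : Submodule (WittVector p k) (WittVector p k))))) :
    (∃ x : k × k, x ≠ 0 ∧ M = Mmod p k x) ∧
    (∀ x y : k × k, x ≠ 0 → y ≠ 0 → M = Mmod p k x → M = Mmod p k y →
      ∃ c : kˣ, y.1 = (c : k) * x.1 ∧ y.2 = (c : k) * x.2) ∧
    (∀ x : k × k,
      (∀ z ∈ Mmod p k x, Fop p k z ∈ Mmod p k x) ∧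
      (∀ z ∈ Mmod p k x, Vop p k z ∈ Mmod p k x)) ∧
    (∀ x : k × k, x.1 ≠ 0 → x.2 ≠ 0 →
      {y : Fin 6 → WittVector p k |
          ∃ a ∈ Mmod p k x, ∃ b ∈ Mmod p k x, y = Fop p k a + Vop p k b}
        = (FVN p k : Set (Fin 6 → WittVector p k))) := by
  obtain ⟨e⟩ := hq1
  refine ⟨exists_eq_Mmod_of_covBy (covBy_of_linearEquiv_quotient hlow isMaximal_span_p e),
    fun x y _ hy hMx hMy ↦ ?_,
    fun x ↦ ⟨fun z _ ↦ Submodule.mem_sup_left (Fop_mem_FVN z),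
      fun z _ ↦ Submodule.mem_sup_left (Vop_mem_FVN z)⟩,
    fun x hx1 hx2 ↦ image_Fop_add_Vop_Mmod hx1 hx2⟩
  obtain ⟨c, rfl⟩ := exists_unit_smul_of_Mmod_eq hy (hMx.symm.trans hMy)
  exact ⟨c, rfl, rfl⟩

end Stmt8
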